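/- arXiv:1108.5357 — 3 statements merged into one kernel-verified Lean document; each statement's English description precedes it below -/
import Mathlib

section
/- Let ρ_AB be a positive semi-definite operator on a finite-dimensional Hilbert space H_A ⊗ H_B of the form ρ_AB = Σ_k ρ_A^k ⊗ |k⟩⟨k|_B, where the ρ_A^k are positive semi-definite and the |k⟩_B are mutually orthogonal unit vectors. Then the alternative conditional max-entropy H_0(A|B)_ρ := sup over density operators σ_B of log tr[ρ_AB^0 (1_A ⊗ σ_B)] equals max_k H_0(A)_{ρ^k} = max_k log rank(ρ_A^k), where ρ_AB^0 denotes the projector onto the support of ρ_AB. -/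
open Matrix Kronecker BigOperators
open scoped ComplexOrder

noncomputable section
attribute [local instance] Classical.propDecidable

/-- Square root of a positive semidefinite matrix (junk value `0` otherwise). -/
def msqrt {n : Type*} [Fintype n] [DecidableEq n] (ρ : Matrix n n ℂ) : Matrix n n ℂ :=
  if h : ρ.PosSemidef then
    (h.1.eigenvectorUnitary : Matrix n n ℂ) *
      Matrix.diagonal (fun i => ((Real.sqrt (h.1.eigenvalues i) : ℝ) : ℂ)) *
      star (h.1.eigenvectorUnitary : Matrix n n ℂ)
  else 0

/-- The trace norm `‖M‖₁ = tr √(Mᴴ M)` of a (possibly rectangular) complex matrix. -/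
def traceNorm {n m : Type*} [Fintype n] [Fintype m] [DecidableEq m] (M : Matrix n m ℂ) : ℝ :=
  (msqrt (Mᴴ * M)).trace.re

/-- The Hilbert-Schmidt (Frobenius) norm of a complex matrix. -/
def frobNorm {n m : Type*} [Fintype n] [Fintype m] (M : Matrix n m ℂ) : ℝ :=
  Real.sqrt (∑ i, ∑ j, ‖M i j‖ ^ 2)

/-- A density operator: positive semidefinite with unit trace. -/
def IsDensity {n : Type*} [Fintype n] (ρ : Matrix n n ℂ) : Prop :=
  ρ.PosSemidef ∧ ρ.trace = 1

/-- The projector onto the support of a Hermitian matrix (junk value `0` otherwise). -/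
def suppProj {n : Type*} [Fintype n] [DecidableEq n] (ρ : Matrix n n ℂ) : Matrix n n ℂ :=
  if h : ρ.IsHermitian then
    (h.eigenvectorUnitary : Matrix n n ℂ) *
      Matrix.diagonal (fun i => if h.eigenvalues i = 0 then (0 : ℂ) else 1) *
      star (h.eigenvectorUnitary : Matrix n n ℂ)
  else 0

/-- The von Neumann entropy (base 2) of a Hermitian matrix (junk value `0` otherwise). -/
def vnEntropy {n : Type*} [Fintype n] [DecidableEq n] (ρ : Matrix n n ℂ) : ℝ :=
  if h : ρ.IsHermitian then -∑ i, h.eigenvalues i * Real.logb 2 (h.eigenvalues i) else 0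

/-- Partial trace over the second tensor factor. -/
def ptr2 {X Y : Type*} [Fintype X] [Fintype Y] (ρ : Matrix (X × Y) (X × Y) ℂ) :
    Matrix X X ℂ :=
  Matrix.of fun x x' => ∑ y, ρ (x, y) (x', y)

/-- Partial trace over the first tensor factor. -/
def ptr1 {X Y : Type*} [Fintype X] [Fintype Y] (ρ : Matrix (X × Y) (X × Y) ℂ) :
    Matrix Y Y ℂ :=
  Matrix.of fun y y' => ∑ x, ρ (x, y) (x, y')

/-- The rank-one projector `|ψ⟩⟨ψ|` associated to a vector `ψ`. -/
def pureMat {n : Type*} (ψ : n → ℂ) : Matrix n n ℂ :=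
  Matrix.vecMulVec ψ (star ψ)

/-- `ψ` is a unit vector. -/
def IsUnit' {n : Type*} [Fintype n] (ψ : n → ℂ) : Prop := ∑ z, ‖ψ z‖ ^ 2 = 1

/-- The binary entropy function with logarithms in base 2. -/
def binEnt (x : ℝ) : ℝ := -(x * Real.logb 2 x) - (1 - x) * Real.logb 2 (1 - x)

/-- The entanglement of formation of a bipartite state, as the infimum over pure-state
decompositions of the average entropy of entanglement. -/
def EoF {A B : Type*} [Fintype A] [Fintype B] [DecidableEq A]
    (ρ : Matrix (A × B) (A × B) ℂ) : ℝ :=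
  sInf { x | ∃ (m : ℕ) (p : Fin m → ℝ) (ψ : Fin m → (A × B) → ℂ),
    (∀ i, 0 < p i) ∧ (∀ i, IsUnit' (ψ i)) ∧
    ρ = ∑ i, (p i : ℂ) • pureMat (ψ i) ∧
    x = ∑ i, p i * vnEntropy (ptr2 (pureMat (ψ i))) }

/-- The alternative conditional max-entropy
`H₀(A|B)_ρ = sup_σ log tr[ρ⁰ (1 ⊗ σ)]`, supremum over density operators `σ` on `B`. -/
def H0cond {A B : Type*} [Fintype A] [Fintype B] [DecidableEq A] [DecidableEq B]
    (ρ : Matrix (A × B) (A × B) ℂ) : ℝ :=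
  sSup { x | ∃ σ : Matrix B B ℂ, IsDensity σ ∧
    x = Real.logb 2 ((suppProj ρ * ((1 : Matrix A A ℂ) ⊗ₖ σ)).trace.re) }

/-- Separability of a bipartite state. -/
def IsSep {A B : Type*} [Fintype A] [Fintype B] (ρ : Matrix (A × B) (A × B) ℂ) : Prop :=
  ∃ (N : ℕ) (q : Fin N → ℝ) (α : Fin N → Matrix A A ℂ) (β : Fin N → Matrix B B ℂ),
    (∀ i, 0 ≤ q i) ∧ (∀ i, IsDensity (α i)) ∧ (∀ i, IsDensity (β i)) ∧
    ρ = ∑ i, (q i : ℂ) • (α i ⊗ₖ β i)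

/-- `n`-fold tensor power of a matrix. -/
def tensorPow {X : Type*} (ρ : Matrix X X ℂ) (n : ℕ) :
    Matrix (Fin n → X) (Fin n → X) ℂ :=
  Matrix.of fun f g => ∏ i, ρ (f i) (g i)

/-!
The support projector `ρ⁰` of a Hermitian `ρ` is the only self-adjoint `P` with `P ρ = ρ` and
`P = X ρ` for some `X`: two such `P, Q` satisfy `P Q = P` and `Q P = Q`, hence
`P = P Q = (Q P)ᴴ = Q`. For `ρ = ∑ₖ ρₖ ⊗ |k⟩⟨k|` with orthonormal `|k⟩` the block-diagonal
`∑ₖ ρₖ⁰ ⊗ |k⟩⟨k|` has both properties, so `tr[ρ⁰ (1 ⊗ σ)] = ∑ₖ rank ρₖ · ⟨k|σ|k⟩`. The weights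
`⟨k|σ|k⟩` are nonnegative and, since `1 - ∑ₖ |k⟩⟨k|` is a projector, sum to at most `tr σ = 1`;
so the trace is at most `maxₖ rank ρₖ`, with equality at `σ = |k⟩⟨k|` for a maximising `k`.
-/

theorem IsSelfAdjoint.eq_of_mul_eq_self {R : Type*} [Semigroup R] [StarMul R] {a p q x y : R}
    (ha : IsSelfAdjoint a) (hp : IsSelfAdjoint p) (hq : IsSelfAdjoint q)
    (hpa : p * a = a) (hqa : q * a = a) (hpx : p = x * a) (hqy : q = y * a) : p = q := by
  have hap : a * p = a := by simpa [ha.star_eq, hp.star_eq] using congr(star $hpa)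
  have haq : a * q = a := by simpa [ha.star_eq, hq.star_eq] using congr(star $hqa)
  have hpq : p * q = p := by rw [hpx, mul_assoc, haq]
  have hqp : q * p = q := by rw [hqy, mul_assoc, hap]
  calc p = p * q := hpq.symm
    _ = star (q * p) := by rw [star_mul, hp.star_eq, hq.star_eq]
    _ = q := by rw [hqp, hq.star_eq]

namespace Matrix

theorem IsHermitian.kronecker {α m n : Type*} [CommSemiring α] [StarRing α] {M : Matrix m m α}
    {N : Matrix n n α} (hM : M.IsHermitian) (hN : N.IsHermitian) : (M ⊗ₖ N).IsHermitian := by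
  rw [IsHermitian, conjTranspose_kronecker, hM.eq, hN.eq]

section SupportProjection

variable {n : Type*} [Fintype n] [DecidableEq n] {ρ : Matrix n n ℂ}

theorem exists_spectral_suppProj (hρ : ρ.IsHermitian) :
    ∃ (U : unitaryGroup n ℂ) (d : n → ℝ),
      ρ = Unitary.conjStarAlgAut ℂ _ U (diagonal fun i => (d i : ℂ)) ∧
      suppProj ρ = Unitary.conjStarAlgAut ℂ _ U (diagonal fun i => if d i = 0 then 0 else 1) :=
  ⟨_, _, hρ.spectral_theorem, dif_pos hρ⟩

theorem isHermitian_suppProj (hρ : ρ.IsHermitian) : (suppProj ρ).IsHermitian := by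
  obtain ⟨U, d, -, hP⟩ := exists_spectral_suppProj hρ
  rw [hP]
  refine (isHermitian_diagonal_of_self_adjoint _ ?_).isSelfAdjoint.map _
  ext i
  split_ifs <;> simp_all

theorem suppProj_mul_self (hρ : ρ.IsHermitian) : suppProj ρ * ρ = ρ := by
  obtain ⟨U, d, hρU, hP⟩ := exists_spectral_suppProj hρ
  rw [hP, hρU, ← map_mul, diagonal_mul_diagonal]
  congr 2
  ext i
  split_ifs with h <;> simp [h]

/-- The witness is the Moore–Penrose pseudo-inverse of `ρ`. -/
theorem exists_suppProj_eq_mul (hρ : ρ.IsHermitian) : ∃ X, suppProj ρ = X * ρ := by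
  obtain ⟨U, d, hρU, hP⟩ := exists_spectral_suppProj hρ
  refine ⟨Unitary.conjStarAlgAut ℂ _ U (diagonal fun i => (d i : ℂ)⁻¹), ?_⟩
  rw [hP, hρU, ← map_mul, diagonal_mul_diagonal]
  congr 2
  ext i
  split_ifs with h <;> simp [h]

theorem trace_suppProj (hρ : ρ.IsHermitian) : (suppProj ρ).trace = ρ.rank := by
  rw [suppProj, dif_pos hρ, trace_mul_cycle,
    Unitary.coe_star_mul_self, one_mul, trace_diagonal, hρ.rank_eq_card_non_zero_eigs,
    Fintype.card_subtype]
  simp [Finset.sum_ite]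

theorem suppProj_eq_of_mul_eq_self {P X : Matrix n n ℂ} (hρ : ρ.IsHermitian)
    (hP : P.IsHermitian) (hPρ : P * ρ = ρ) (hPX : P = X * ρ) : suppProj ρ = P := by
  obtain ⟨Y, hY⟩ := exists_suppProj_eq_mul hρ
  exact IsSelfAdjoint.eq_of_mul_eq_self hρ (isHermitian_suppProj hρ) hP
    (suppProj_mul_self hρ) hPρ hY hPX

end SupportProjection

section BlockDiagonal

variable {A B K : Type*} [Fintype K]

theorem sum_kronecker_mul_sum_kronecker [Fintype A] [Fintype B] [DecidableEq K]
    {R : Type*} [CommSemiring R] {w : K → Matrix B B R}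
    (hw : ∀ k k', w k * w k' = if k = k' then w k else 0) (M N : K → Matrix A A R) :
    (∑ k, M k ⊗ₖ w k) * (∑ k, N k ⊗ₖ w k) = ∑ k, (M k * N k) ⊗ₖ w k := by
  have hterm (k k' : K) :
      (M k * N k') ⊗ₖ (w k * w k') = if k = k' then (M k * N k) ⊗ₖ w k else 0 := by
    split_ifs with h <;> simp [hw, h]
  simp_rw [Finset.sum_mul_sum, ← mul_kronecker_mul, hterm, Finset.sum_ite_eq, Finset.mem_univ,
    if_true]

theorem isHermitian_sum_kronecker {M : K → Matrix A A ℂ} {w : K → Matrix B B ℂ}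
    (hM : ∀ k, (M k).IsHermitian) (hw : ∀ k, (w k).IsHermitian) :
    (∑ k, M k ⊗ₖ w k).IsHermitian :=
  isSelfAdjoint_sum _ fun k _ => ((hM k).kronecker (hw k)).isSelfAdjoint

theorem suppProj_sum_kronecker [Fintype A] [Fintype B] [DecidableEq A] [DecidableEq B]
    [DecidableEq K] {M : K → Matrix A A ℂ} {w : K → Matrix B B ℂ}
    (hM : ∀ k, (M k).IsHermitian) (hw_herm : ∀ k, (w k).IsHermitian)
    (hw : ∀ k k', w k * w k' = if k = k' then w k else 0) :
    suppProj (∑ k, M k ⊗ₖ w k) = ∑ k, suppProj (M k) ⊗ₖ w k := by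
  choose X hX using fun k => exists_suppProj_eq_mul (hM k)
  refine suppProj_eq_of_mul_eq_self (X := ∑ k, X k ⊗ₖ w k)
    (isHermitian_sum_kronecker hM hw_herm)
    (isHermitian_sum_kronecker (fun k => isHermitian_suppProj (hM k)) hw_herm) ?_ ?_
  · simp_rw [sum_kronecker_mul_sum_kronecker hw, suppProj_mul_self (hM _)]
  · simp_rw [sum_kronecker_mul_sum_kronecker hw, ← hX]

theorem trace_sum_kronecker_mul_one_kronecker [Fintype A] [Fintype B] [DecidableEq A]
    {R : Type*} [CommSemiring R] (P : K → Matrix A A R) (w : K → Matrix B B R)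
    (σ : Matrix B B R) :
    ((∑ k, P k ⊗ₖ w k) * ((1 : Matrix A A R) ⊗ₖ σ)).trace =
      ∑ k, (P k).trace * (w k * σ).trace := by
  simp_rw [Finset.sum_mul, trace_sum, ← mul_kronecker_mul, mul_one, trace_kronecker]

end BlockDiagonal

theorem PosSemidef.trace_mul_nonneg_of_isStarProjection {n : Type*} [Fintype n]
    {σ Q : Matrix n n ℂ} (hσ : σ.PosSemidef) (hQ : IsStarProjection Q) :
    0 ≤ (Q * σ).trace := by
  have h := (hσ.conjTranspose_mul_mul_same Q).trace_nonneg
  rwa [hQ.isSelfAdjoint.isHermitian.eq, trace_mul_cycle, hQ.isIdempotentElem.eq] at h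

end Matrix

section PureState

open Matrix

variable {B K : Type*} [Fintype B]

theorem isDensity_pureMat {ψ : B → ℂ} (hψ : star ψ ⬝ᵥ ψ = 1) : IsDensity (pureMat ψ) :=
  ⟨posSemidef_vecMulVec_self_star ψ, by rw [pureMat, trace_vecMulVec, dotProduct_comm, hψ]⟩

theorem isStarProjection_pureMat {ψ : B → ℂ} (hψ : star ψ ⬝ᵥ ψ = 1) :
    IsStarProjection (pureMat ψ) :=
  ⟨by rw [IsIdempotentElem, pureMat, vecMulVec_mul_vecMulVec, hψ, one_smul],
    (isDensity_pureMat hψ).1.1.isSelfAdjoint⟩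

variable [DecidableEq K] {v : K → B → ℂ}

theorem pureMat_mul_pureMat_of_orthonormal
    (hv : ∀ k k', star (v k) ⬝ᵥ v k' = if k = k' then 1 else 0) (k k' : K) :
    pureMat (v k) * pureMat (v k') = if k = k' then pureMat (v k) else 0 := by
  rw [pureMat, pureMat, vecMulVec_mul_vecMulVec, hv]
  split_ifs with h
  · rw [h, one_smul]
  · rw [zero_smul, vecMulVec_zero]

theorem sum_trace_pureMat_mul_le_trace [Fintype K]
    (hv : ∀ k k', star (v k) ⬝ᵥ v k' = if k = k' then 1 else 0) {σ : Matrix B B ℂ}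
    (hσ : σ.PosSemidef) : ∑ k, (pureMat (v k) * σ).trace ≤ σ.trace := by
  set W := ∑ k, pureMat (v k)
  have hW : IsStarProjection W := by
    refine ⟨?_, isSelfAdjoint_sum _ fun k _ => (isStarProjection_pureMat ?_).isSelfAdjoint⟩
    · simp_rw [IsIdempotentElem, W, Finset.sum_mul_sum, pureMat_mul_pureMat_of_orthonormal hv,
        Finset.sum_ite_eq, Finset.mem_univ, if_true]
    · simpa using hv k k
  have h := hσ.trace_mul_nonneg_of_isStarProjection hW.one_sub
  rwa [sub_mul, one_mul, trace_sub, sub_nonneg, Finset.sum_mul, trace_sum] at h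

end PureState

theorem Real.logb_le_logb_natCast {b t : ℝ} {N : ℕ} (hb : 1 < b) (ht : 0 ≤ t)
    (htN : t ≤ N) : Real.logb b t ≤ Real.logb b N := by
  rcases ht.eq_or_lt with rfl | ht
  · rw [Real.logb_zero]
    exact div_nonneg (Real.log_natCast_nonneg N) (Real.log_nonneg hb.le)
  · exact Real.logb_le_logb_of_le hb ht htN

theorem Real.monotone_logb_natCast {b : ℝ} (hb : 1 < b) : Monotone fun n : ℕ => Real.logb b n :=
  fun _ _ h => Real.logb_le_logb_natCast hb (Nat.cast_nonneg _) (Nat.cast_le.2 h)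

theorem Finset.sum_natCast_mul_le_sup' {K : Type*} [Fintype K] [Nonempty K] (r : K → ℕ)
    {q : K → ℝ} (hq : ∀ k, 0 ≤ q k) (hq1 : ∑ k, q k ≤ 1) :
    ∑ k, (r k : ℝ) * q k ≤ univ.sup' univ_nonempty r := by
  set R := univ.sup' univ_nonempty r
  calc ∑ k, (r k : ℝ) * q k ≤ ∑ k, (R : ℝ) * q k :=
        sum_le_sum fun k _ => mul_le_mul_of_nonneg_right
          (Nat.cast_le.2 (le_sup' r (mem_univ k))) (hq k)
    _ = R * ∑ k, q k := (mul_sum _ _ _).symm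
    _ ≤ R := mul_le_of_le_one_right (Nat.cast_nonneg _) hq1

/-- For a quantum-classical operator `ρ_AB = Σ_k ρ_A^k ⊗ |k⟩⟨k|_B` (with the
`|k⟩_B` mutually orthogonal unit vectors and each `ρ_A^k` positive semidefinite), the alternative
conditional max-entropy equals `max_k log rank(ρ_A^k)`. -/
theorem H0cond_of_qc {A B K : Type*} [Fintype A] [Fintype B] [Fintype K] [Nonempty K]
    [DecidableEq A] [DecidableEq B] [DecidableEq K]
    (ρA : K → Matrix A A ℂ) (hρA : ∀ k, (ρA k).PosSemidef)
    (v : K → B → ℂ)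
    (hv : ∀ k k', ∑ i, (starRingEnd ℂ) (v k i) * v k' i = if k = k' then 1 else 0) :
    H0cond (∑ k, (ρA k) ⊗ₖ pureMat (v k)) =
      Finset.univ.sup' Finset.univ_nonempty
        (fun k => Real.logb 2 ((ρA k).rank : ℝ)) := by
  have hv' : ∀ k k', star (v k) ⬝ᵥ v k' = if k = k' then 1 else 0 := hv
  have hunit (k : K) : star (v k) ⬝ᵥ v k = 1 := by simpa using hv' k k
  have htrace (σ : Matrix B B ℂ) :
      (suppProj (∑ k, ρA k ⊗ₖ pureMat (v k)) * ((1 : Matrix A A ℂ) ⊗ₖ σ)).trace.re =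
        ∑ k, ((ρA k).rank : ℝ) * (pureMat (v k) * σ).trace.re := by
    rw [suppProj_sum_kronecker (fun k => (hρA k).1)
      (fun k => (isStarProjection_pureMat (hunit k)).isSelfAdjoint)
      (pureMat_mul_pureMat_of_orthonormal hv'), trace_sum_kronecker_mul_one_kronecker,
      Complex.re_sum]
    simp [trace_suppProj (hρA _).1]
  have hweight (σ : Matrix B B ℂ) (hσ : σ.PosSemidef) (k : K) :
      0 ≤ (pureMat (v k) * σ).trace.re :=
    Complex.re_le_re (hσ.trace_mul_nonneg_of_isStarProjection (isStarProjection_pureMat (hunit k)))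
  have hmax : Finset.univ.sup' Finset.univ_nonempty (fun k => Real.logb 2 ((ρA k).rank : ℝ)) =
      Real.logb 2 ((Finset.univ.sup' Finset.univ_nonempty (ρA · |>.rank) : ℕ) : ℝ) :=
    (Finset.apply_sup'_eq_sup'_comp _ (fun n : ℕ => Real.logb 2 n)
      (Real.monotone_logb_natCast one_lt_two).map_sup).symm
  rw [hmax]
  refine IsGreatest.csSup_eq ⟨?_, ?_⟩
  · obtain ⟨k₀, -, hk₀⟩ := Finset.exists_mem_eq_sup' Finset.univ_nonempty (ρA · |>.rank)
    refine ⟨pureMat (v k₀), isDensity_pureMat (hunit k₀), ?_⟩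
    rw [htrace, hk₀]
    simp [pureMat_mul_pureMat_of_orthonormal hv', apply_ite trace, apply_ite Complex.re,
      (isDensity_pureMat (hunit _)).2]
  · rintro _ ⟨σ, hσ, rfl⟩
    rw [htrace]
    refine Real.logb_le_logb_natCast one_lt_two
      (Finset.sum_nonneg fun k _ => mul_nonneg (Nat.cast_nonneg _) (hweight σ hσ.1 k))
      (Finset.sum_natCast_mul_le_sup' _ (hweight σ hσ.1) ?_)
    simpa [hσ.2] using Complex.re_le_re (sum_trace_pureMat_mul_le_trace hv' hσ.1)
end
end

section
/- Let ρ and σ be positive semi-definite operators on a finite-dimensional Hilbert space with eigenvalue sequences (arranged in decreasing order) P and Q respectively. Then ‖ρ − σ‖_1 ≥ ‖P − Q‖_1, i.e., the trace distance between the operators is at least the ℓ¹ distance between their ordered eigenvalue vectors. -/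
open Matrix Kronecker BigOperators
open scoped ComplexOrder

noncomputable section
attribute [local instance] Classical.propDecidable

/-!
Write `ρ - σ = Δ⁺ - Δ⁻` with `Δ⁺, Δ⁻ ≥ 0` and put `R = ρ + Δ⁻ = σ + Δ⁺`. Then `ρ ≤ R` and `σ ≤ R`,
so by Weyl's monotonicity theorem the `i`-th largest eigenvalues satisfy `pᵢ ≤ rᵢ` and `qᵢ ≤ rᵢ`,
hence `|pᵢ - qᵢ| ≤ (rᵢ - pᵢ) + (rᵢ - qᵢ)`. Summing over `i` gives
`tr (R - ρ) + tr (R - σ) = tr Δ⁻ + tr Δ⁺ = tr |ρ - σ|`.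

Weyl's theorem itself is a dimension count: some unit vector `x` lies in the span of the top `i + 1`
eigenvectors of `ρ` and in the span of the bottom `d - i` eigenvectors of `R`, and then
`pᵢ ≤ ⟪ρ x, x⟫ ≤ ⟪R x, x⟫ ≤ rᵢ`.
-/

lemma OrthonormalBasis.exists_ne_zero_repr_eq_zero {𝕜 E : Type*} [RCLike 𝕜]
    [NormedAddCommGroup E] [InnerProductSpace 𝕜 E] {n : ℕ} (b b' : OrthonormalBasis (Fin n) 𝕜 E)
    (i : Fin n) :
    ∃ x ≠ 0, (∀ j, i < j → b.repr x j = 0) ∧ ∀ j, j < i → b'.repr x j = 0 := by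
  have := Module.Finite.of_basis b.toBasis
  let g : E →ₗ[𝕜] ({j // j ≠ i} → 𝕜) :=
    { toFun := fun x j => if i < j.1 then b.repr x j else b'.repr x j
      map_add' := fun x y => by ext j; by_cases h : i < j.1 <;> simp [h]
      map_smul' := fun c x => by ext j; by_cases h : i < j.1 <;> simp [h] }
  have hdim : Module.finrank 𝕜 ({j // j ≠ i} → 𝕜) < Module.finrank 𝕜 E := by
    rw [Module.finrank_fintype_fun_eq_card, Module.finrank_eq_card_basis b.toBasis,
      Fintype.card_subtype_compl, Fintype.card_subtype_eq, Fintype.card_fin]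
    exact Nat.sub_one_lt i.pos.ne'
  obtain ⟨x, hx, hx0⟩ :=
    Submodule.exists_mem_ne_zero_of_ne_bot (LinearMap.ker_ne_bot_of_finrank_lt hdim)
  have hgx : g x = 0 := hx
  refine ⟨x, hx0, fun j hj => ?_, fun j hj => ?_⟩
  · simpa [g, hj] using congrFun hgx ⟨j, hj.ne'⟩
  · simpa [g, hj.not_gt] using congrFun hgx ⟨j, hj.ne⟩

namespace LinearMap.IsSymmetric

variable {𝕜 E : Type*} [RCLike 𝕜] [NormedAddCommGroup E] [InnerProductSpace 𝕜 E]
  [FiniteDimensional 𝕜 E] {T : E →ₗ[𝕜] E} {n : ℕ}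

lemma re_inner_apply_self_eq_sum (hT : T.IsSymmetric) (hn : Module.finrank 𝕜 E = n) (x : E) :
    RCLike.re (inner 𝕜 (T x) x) =
      ∑ i, hT.eigenvalues hn i * ‖(hT.eigenvectorBasis hn).repr x i‖ ^ 2 := by
  rw [← (hT.eigenvectorBasis hn).repr.inner_map_map, PiLp.inner_apply, map_sum]
  refine Finset.sum_congr rfl fun i _ => ?_
  rw [eigenvectorBasis_apply_self_apply, ← smul_eq_mul, inner_smul_real_left, RCLike.smul_re,
    inner_self_eq_norm_sq]

lemma eigenvalues_mul_norm_sq_le_re_inner (hT : T.IsSymmetric) (hn : Module.finrank 𝕜 E = n)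
    {i : Fin n} {x : E} (hx : ∀ j, i < j → (hT.eigenvectorBasis hn).repr x j = 0) :
    hT.eigenvalues hn i * ‖x‖ ^ 2 ≤ RCLike.re (inner 𝕜 (T x) x) := by
  rw [re_inner_apply_self_eq_sum, ← (hT.eigenvectorBasis hn).repr.norm_map,
    EuclideanSpace.norm_sq_eq, Finset.mul_sum]
  refine Finset.sum_le_sum fun j _ => ?_
  rcases lt_or_ge i j with hij | hji
  · simp [hx j hij]
  · exact mul_le_mul_of_nonneg_right (hT.eigenvalues_antitone hn hji) (sq_nonneg _)

lemma re_inner_le_eigenvalues_mul_norm_sq (hT : T.IsSymmetric) (hn : Module.finrank 𝕜 E = n)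
    {i : Fin n} {x : E} (hx : ∀ j, j < i → (hT.eigenvectorBasis hn).repr x j = 0) :
    RCLike.re (inner 𝕜 (T x) x) ≤ hT.eigenvalues hn i * ‖x‖ ^ 2 := by
  rw [re_inner_apply_self_eq_sum, ← (hT.eigenvectorBasis hn).repr.norm_map,
    EuclideanSpace.norm_sq_eq, Finset.mul_sum]
  refine Finset.sum_le_sum fun j _ => ?_
  rcases lt_or_ge j i with hji | hij
  · simp [hx j hji]
  · exact mul_le_mul_of_nonneg_right (hT.eigenvalues_antitone hn hij) (sq_nonneg _)

theorem eigenvalues_le_of_le {S : E →ₗ[𝕜] E} (hT : T.IsSymmetric) (hS : S.IsSymmetric) (hTS : T ≤ S)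
    (hn : Module.finrank 𝕜 E = n) (i : Fin n) : hT.eigenvalues hn i ≤ hS.eigenvalues hn i := by
  obtain ⟨x, hx0, hxT, hxS⟩ :=
    (hT.eigenvectorBasis hn).exists_ne_zero_repr_eq_zero (hS.eigenvectorBasis hn) i
  have hTS_x : RCLike.re (inner 𝕜 (T x) x) ≤ RCLike.re (inner 𝕜 (S x) x) := by
    have := hTS.re_inner_nonneg_left x
    rwa [sub_apply, inner_sub_left, map_sub, sub_nonneg] at this
  refine le_of_mul_le_mul_right ?_ (pow_pos (norm_pos_iff.mpr hx0) 2)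
  exact (hT.eigenvalues_mul_norm_sq_le_re_inner hn hxT).trans <|
    hTS_x.trans (hS.re_inner_le_eigenvalues_mul_norm_sq hn hxS)

end LinearMap.IsSymmetric

namespace Matrix

variable {n : Type*} [Fintype n] [DecidableEq n]

namespace IsHermitian

variable {𝕜 : Type*} [RCLike 𝕜] {A B : Matrix n n 𝕜}

lemma eigenvalues_comp_eq_eigenvalues₀ (hA : A.IsHermitian) {e : Fin (Fintype.card n) ≃ n}
    (he : Antitone (hA.eigenvalues ∘ e)) : hA.eigenvalues ∘ e = hA.eigenvalues₀ :=
  Tuple.unique_antitone (σ := e.trans (Fintype.equivOfCardEq (Fintype.card_fin _)).symm)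
    (τ := Equiv.refl _) he hA.eigenvalues₀_antitone

lemma sum_eigenvalues₀ (hA : A.IsHermitian) : ∑ i, hA.eigenvalues₀ i = RCLike.re A.trace := by
  rw [hA.trace_eq_sum_eigenvalues, map_sum]
  simp only [RCLike.ofReal_re]
  exact ((Fintype.equivOfCardEq (Fintype.card_fin _)).symm.sum_comp hA.eigenvalues₀).symm

open scoped MatrixOrder in
theorem eigenvalues₀_le_of_le (hA : A.IsHermitian) (hB : B.IsHermitian) (hAB : A ≤ B)
    (i : Fin (Fintype.card n)) : hA.eigenvalues₀ i ≤ hB.eigenvalues₀ i := by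
  refine LinearMap.IsSymmetric.eigenvalues_le_of_le _ _ ?_ _ i
  rw [LinearMap.le_def, ← map_sub, isPositive_toEuclideanLin_iff]
  exact le_iff.mp hAB

end IsHermitian

open scoped MatrixOrder

lemma msqrt_eq_sqrt {M : Matrix n n ℂ} (hM : M.PosSemidef) : msqrt M = CFC.sqrt M := by
  rw [msqrt, dif_pos hM, CFC.sqrt_eq_real_sqrt M hM.nonneg, cfcₙ_eq_cfc, hM.1.cfc_eq,
    IsHermitian.cfc, Unitary.conjStarAlgAut_apply]
  rfl

lemma traceNorm_eq_re_trace_abs (M : Matrix n n ℂ) :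
    traceNorm M = RCLike.re (CFC.abs M).trace := by
  rw [traceNorm, msqrt_eq_sqrt (posSemidef_conjTranspose_mul_self M), CFC.abs,
    star_eq_conjTranspose]
  rfl

theorem IsHermitian.sum_abs_sub_eigenvalues₀_le_traceNorm {A B : Matrix n n ℂ}
    (hA : A.IsHermitian) (hB : B.IsHermitian) :
    ∑ i, |hA.eigenvalues₀ i - hB.eigenvalues₀ i| ≤ traceNorm (A - B) := by
  set Δ := A - B with hΔ_def
  have hΔ : IsSelfAdjoint Δ := hA.sub hB
  set R := A + Δ⁻
  have hRA : R - A = Δ⁻ := add_sub_cancel_left A _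
  have hRB : R - B = Δ⁺ := by
    rw [sub_eq_iff_eq_add.mp (CFC.posPart_sub_negPart Δ), ← hRA, hΔ_def]
    abel
  have hR : R.IsHermitian := hA.add (nonneg_iff_posSemidef.mp (CFC.negPart_nonneg Δ)).1
  have hAR := hA.eigenvalues₀_le_of_le hR (sub_nonneg.mp (hRA ▸ CFC.negPart_nonneg Δ))
  have hBR := hB.eigenvalues₀_le_of_le hR (sub_nonneg.mp (hRB ▸ CFC.posPart_nonneg Δ))
  calc ∑ i, |hA.eigenvalues₀ i - hB.eigenvalues₀ i|
      ≤ ∑ i, ((hR.eigenvalues₀ i - hA.eigenvalues₀ i) + (hR.eigenvalues₀ i - hB.eigenvalues₀ i)) :=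
        Finset.sum_le_sum fun i _ =>
          abs_sub_le_iff.mpr ⟨by linarith [hAR i, hBR i], by linarith [hAR i, hBR i]⟩
    _ = RCLike.re (R - A).trace + RCLike.re (R - B).trace := by
        simp only [Finset.sum_add_distrib, Finset.sum_sub_distrib, IsHermitian.sum_eigenvalues₀,
          trace_sub, map_sub]
    _ = RCLike.re (Δ⁺ + Δ⁻).trace := by rw [hRA, hRB, trace_add, map_add, add_comm]
    _ = traceNorm Δ := by rw [CFC.posPart_add_negPart Δ, traceNorm_eq_re_trace_abs]

end Matrix

/-- The trace distance between two positive semidefinite operators is at least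
the ℓ¹ distance between their decreasingly ordered eigenvalue vectors. -/
theorem eigenvalue_l1_le_traceNorm {n : Type*} [Fintype n] [DecidableEq n]
    (ρ σ : Matrix n n ℂ) (hρ : ρ.PosSemidef) (hσ : σ.PosSemidef)
    (P Q : Fin (Fintype.card n) → ℝ) (hP : Antitone P) (hQ : Antitone Q)
    (e f : Fin (Fintype.card n) ≃ n)
    (hPe : P = hρ.1.eigenvalues ∘ e) (hQf : Q = hσ.1.eigenvalues ∘ f) :
    ∑ i, |P i - Q i| ≤ traceNorm (ρ - σ) := by
  subst hPe hQf
  rw [hρ.1.eigenvalues_comp_eq_eigenvalues₀ hP, hσ.1.eigenvalues_comp_eq_eigenvalues₀ hQ]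
  exact hρ.1.sum_abs_sub_eigenvalues₀_le_traceNorm hσ.1

end
end

section
/- Let ρ, σ be subnormalized positive semi-definite operators (trace ≤ 1) on a finite-dimensional Hilbert space. Define the generalized fidelity F̄(ρ,σ) = F(ρ,σ) + √((1 − tr ρ)(1 − tr σ)) where F is the fidelity, and the purified distance P(ρ,σ) = √(1 − F̄(ρ,σ)²). Then (1/2)‖ρ − σ‖_1 ≤ P(ρ,σ) ≤ √(‖ρ − σ‖_1 + |tr ρ − tr σ|). -/
open Matrix Kronecker BigOperators
open scoped ComplexOrder

noncomputable section
attribute [local instance] Classical.propDecidable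

/-- The fidelity `F(ρ,σ) = ‖√ρ √σ‖₁`. -/
def fidelity {n : Type*} [Fintype n] [DecidableEq n] (ρ σ : Matrix n n ℂ) : ℝ :=
  traceNorm (msqrt ρ * msqrt σ)

/-- The generalized fidelity for subnormalized states. -/
def genFidelity {n : Type*} [Fintype n] [DecidableEq n] (ρ σ : Matrix n n ℂ) : ℝ :=
  fidelity ρ σ + Real.sqrt ((1 - ρ.trace.re) * (1 - σ.trace.re))

/-- The purified distance `P(ρ,σ) = √(1 - F̄(ρ,σ)²)`. -/
def purifiedDist {n : Type*} [Fintype n] [DecidableEq n] (ρ σ : Matrix n n ℂ) : ℝ :=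
  Real.sqrt (1 - genFidelity ρ σ ^ 2)


/-!
Write `S = √ρ`, `T = √σ`, `a = tr ρ`, `b = tr σ` and `F = ‖S T‖₁`. The trace norm is
`‖M‖₁ = max_W Re tr (W M)` over unitaries `W` (the maximum is attained at the unitary factor of a
polar decomposition of `M`), so for a suitable unitary `W` the matrix `B = S W*` satisfies
`B B* = ρ`, `tr B* B = a` and `Re tr B* T = F`.

Lower bound: from `2 (B B* - T T*) = (B - T)(B + T)* + (B + T)(B - T)*` and Cauchy–Schwarz for
the Hilbert–Schmidt inner product, `‖ρ - σ‖₁ ≤ ‖B - T‖₂ ‖B + T‖₂ = √((a + b)² - 4 F²)`; together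
with `F ≤ √(a b)` this leaves an inequality between real numbers.

Upper bound: the Powers–Størmer inequality `tr (S - T)² ≤ ‖S² - T²‖₁` gives
`a + b - 2 F ≤ ‖ρ - σ‖₁`, and then `1 - F̄² ≤ 2 (1 - F̄)` and
`√((1 - a)(1 - b)) ≥ min (1 - a) (1 - b)` finish.
-/

section

variable {n : Type*} [Fintype n]

lemma Matrix.PosSemidef.re_trace_nonneg {A : Matrix n n ℂ} (hA : A.PosSemidef) :
    0 ≤ A.trace.re :=
  (Complex.nonneg_iff.mp hA.trace_nonneg).1

section HilbertSchmidt

variable {m : Type*} [Fintype m]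

lemma re_trace_conjTranspose_mul_comm (A B : Matrix m n ℂ) :
    (Aᴴ * B).trace.re = (Bᴴ * A).trace.re := by
  rw [← Complex.conj_re, ← Complex.star_def, ← trace_conjTranspose, conjTranspose_mul,
    conjTranspose_conjTranspose]

lemma re_trace_conjTranspose_mul_le (A B : Matrix m n ℂ) :
    (Aᴴ * B).trace.re ≤ √(Aᴴ * A).trace.re * √(Bᴴ * B).trace.re := by
  have hinner : ∀ X Y : Matrix m n ℂ,
      inner ℂ (WithLp.toLp 2 X.vec) (WithLp.toLp 2 Y.vec) = (Xᴴ * Y).trace := fun X Y => by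
    rw [EuclideanSpace.inner_toLp_toLp, dotProduct_comm, star_vec_dotProduct_vec]
  have := re_inner_le_norm (𝕜 := ℂ) (WithLp.toLp 2 A.vec) (WithLp.toLp 2 B.vec)
  rwa [norm_eq_sqrt_re_inner (𝕜 := ℂ), norm_eq_sqrt_re_inner (𝕜 := ℂ), hinner, hinner,
    hinner] at this

lemma re_trace_conjTranspose_mul_sub_self (X Y : Matrix m n ℂ) :
    ((X - Y)ᴴ * (X - Y)).trace.re =
      (Xᴴ * X).trace.re + (Yᴴ * Y).trace.re - 2 * (Xᴴ * Y).trace.re := by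
  simp only [conjTranspose_sub, Matrix.sub_mul, Matrix.mul_sub, trace_sub, Complex.sub_re,
    re_trace_conjTranspose_mul_comm Y X]
  ring

lemma re_trace_conjTranspose_mul_add_self (X Y : Matrix m n ℂ) :
    ((X + Y)ᴴ * (X + Y)).trace.re =
      (Xᴴ * X).trace.re + (Yᴴ * Y).trace.re + 2 * (Xᴴ * Y).trace.re := by
  simp only [conjTranspose_add, Matrix.add_mul, Matrix.mul_add, trace_add, Complex.add_re,
    re_trace_conjTranspose_mul_comm Y X]
  ring

end HilbertSchmidt

lemma abs_le_re_diag_conj_add {S T : Matrix n n ℂ} (hS : S.PosSemidef) (hT : T.PosSemidef)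
    (V : Matrix n n ℂ) {l : ℝ} {i : n} (hl : (Vᴴ * (S - T) * V) i i = l) :
    |l| ≤ ((Vᴴ * (S + T) * V) i i).re := by
  have hS' := Complex.nonneg_iff.mp ((hS.conjTranspose_mul_mul_same V).diag_nonneg (i := i))
  have hT' := Complex.nonneg_iff.mp ((hT.conjTranspose_mul_mul_same V).diag_nonneg (i := i))
  simp only [Matrix.mul_sub, Matrix.sub_mul, Matrix.sub_apply] at hl
  simp only [Matrix.mul_add, Matrix.add_mul, Matrix.add_apply, Complex.add_re]
  have := congrArg Complex.re hl
  rw [Complex.sub_re, Complex.ofReal_re] at this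
  rw [abs_le]
  constructor <;> linarith [hS'.1, hT'.1]

variable [DecidableEq n]

namespace Matrix

lemma conjTranspose_mul_self_of_mem_unitaryGroup {U : Matrix n n ℂ}
    (hU : U ∈ unitaryGroup n ℂ) : Uᴴ * U = 1 :=
  mem_unitaryGroup_iff'.mp hU

lemma mul_conjTranspose_self_of_mem_unitaryGroup {U : Matrix n n ℂ}
    (hU : U ∈ unitaryGroup n ℂ) : U * Uᴴ = 1 :=
  mem_unitaryGroup_iff.mp hU

lemma conjTranspose_mem_unitaryGroup {U : Matrix n n ℂ} (hU : U ∈ unitaryGroup n ℂ) :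
    Uᴴ ∈ unitaryGroup n ℂ :=
  Unitary.star_mem hU

lemma trace_mul_diagonal_mul_conjTranspose (V B : Matrix n n ℂ) (f : n → ℂ) :
    (V * diagonal f * Vᴴ * B).trace = ∑ i, f i * (Vᴴ * B * V) i i := by
  rw [Matrix.mul_assoc (V * diagonal f), trace_mul_comm, ← Matrix.mul_assoc]
  simp [trace, mul_diagonal, mul_comm]

lemma mul_diagonal_mul_conjTranspose_mul {V : Matrix n n ℂ} (hV : V ∈ unitaryGroup n ℂ)
    (f g : n → ℂ) :
    V * diagonal f * Vᴴ * (V * diagonal g * Vᴴ) = V * diagonal (f * g) * Vᴴ := by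
  rw [show V * diagonal f * Vᴴ * (V * diagonal g * Vᴴ)
      = V * diagonal f * (Vᴴ * V) * diagonal g * Vᴴ by simp only [Matrix.mul_assoc],
    conjTranspose_mul_self_of_mem_unitaryGroup hV, Matrix.mul_one, Matrix.mul_assoc _ (diagonal f),
    diagonal_mul_diagonal]
  rfl

lemma IsHermitian.eq_mul_diagonal_mul_conjTranspose {A : Matrix n n ℂ} (hA : A.IsHermitian) :
    A = (hA.eigenvectorUnitary : Matrix n n ℂ) * diagonal (RCLike.ofReal ∘ hA.eigenvalues) *
      (hA.eigenvectorUnitary : Matrix n n ℂ)ᴴ := by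
  conv_lhs => rw [hA.spectral_theorem, Unitary.conjStarAlgAut_apply]
  rfl

lemma IsHermitian.conjTranspose_mul_mul_eigenvectorUnitary {A : Matrix n n ℂ}
    (hA : A.IsHermitian) :
    (hA.eigenvectorUnitary : Matrix n n ℂ)ᴴ * A * (hA.eigenvectorUnitary : Matrix n n ℂ) =
      diagonal (RCLike.ofReal ∘ hA.eigenvalues) := by
  rw [← star_eq_conjTranspose]
  simpa [Unitary.conjStarAlgAut_apply] using hA.conjStarAlgAut_star_eigenvectorUnitary

end Matrix

lemma msqrt_of_posSemidef {ρ : Matrix n n ℂ} (h : ρ.PosSemidef) :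
    msqrt ρ = (h.1.eigenvectorUnitary : Matrix n n ℂ) *
      diagonal (fun i => ((√(h.1.eigenvalues i) : ℝ) : ℂ)) *
      (h.1.eigenvectorUnitary : Matrix n n ℂ)ᴴ :=
  dif_pos h

lemma posSemidef_msqrt {ρ : Matrix n n ℂ} (h : ρ.PosSemidef) : (msqrt ρ).PosSemidef := by
  rw [msqrt_of_posSemidef h]
  exact (posSemidef_diagonal_iff.mpr fun i => Complex.zero_le_real.mpr (Real.sqrt_nonneg _))
    |>.mul_mul_conjTranspose_same _

lemma msqrt_mul_msqrt {ρ : Matrix n n ℂ} (h : ρ.PosSemidef) : msqrt ρ * msqrt ρ = ρ := by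
  rw [msqrt_of_posSemidef h, mul_diagonal_mul_conjTranspose_mul h.1.eigenvectorUnitary.2]
  conv_rhs => rw [h.1.eq_mul_diagonal_mul_conjTranspose]
  congr 3
  ext i
  simp [← Complex.ofReal_mul, Real.mul_self_sqrt (h.eigenvalues_nonneg i)]

lemma traceNorm_eq_sum_sqrt_eigenvalues (M : Matrix n n ℂ) :
    traceNorm M = ∑ i, √((posSemidef_conjTranspose_mul_self M).1.eigenvalues i) := by
  rw [traceNorm, msqrt_of_posSemidef (posSemidef_conjTranspose_mul_self M), trace_mul_comm,
    ← Matrix.mul_assoc, conjTranspose_mul_self_of_mem_unitaryGroup (Subtype.prop _),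
    Matrix.one_mul, trace_diagonal, Complex.re_sum]
  simp

lemma traceNorm_nonneg (M : Matrix n n ℂ) : 0 ≤ traceNorm M := by
  rw [traceNorm_eq_sum_sqrt_eigenvalues]
  positivity

lemma exists_unitary_mul_diagonal_sqrt_eq {K : Matrix n n ℂ} {d : n → ℝ} (hd : ∀ i, 0 ≤ d i)
    (hK : Kᴴ * K = diagonal (RCLike.ofReal ∘ d)) :
    ∃ U ∈ unitaryGroup n ℂ, U * diagonal (fun i => ((√(d i) : ℝ) : ℂ)) = K := by
  let col : n → EuclideanSpace ℂ n := fun i => WithLp.toLp 2 fun j => K j i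
  have hcol : ∀ i j, inner ℂ (col i) (col j) = if i = j then (d i : ℂ) else 0 := by
    intro i j
    have : inner ℂ (col i) (col j) = (Kᴴ * K) i j := by
      simp [col, EuclideanSpace.inner_toLp_toLp, dotProduct, mul_apply, mul_comm]
    rw [this, hK, diagonal_apply]
    rfl
  have hsqrt : ∀ i, d i ≠ 0 → ((√(d i) : ℝ) : ℂ) ≠ 0 := fun i hi => by
    exact_mod_cast (Real.sqrt_pos.mpr (lt_of_le_of_ne (hd i) (Ne.symm hi))).ne'
  let v : n → EuclideanSpace ℂ n := fun i => ((√(d i) : ℝ) : ℂ)⁻¹ • col i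
  have hv : Orthonormal ℂ ({i | d i ≠ 0}.domRestrict v) := by
    rw [orthonormal_iff_ite]
    rintro ⟨i, hi⟩ ⟨j, hj⟩
    simp only [Set.domRestrict_apply, v, inner_smul_left, inner_smul_right, hcol,
      Subtype.mk.injEq]
    split_ifs with hij
    · subst hij
      have hsq : ((√(d i) : ℝ) : ℂ) * ((√(d i) : ℝ) : ℂ) = d i := by
        exact_mod_cast Real.mul_self_sqrt (hd i)
      rw [← hsq, Complex.conj_inv, Complex.conj_ofReal]
      field_simp [hsqrt i hi]
    · simp
  obtain ⟨b, hb⟩ := hv.exists_orthonormalBasis_extension_of_card_eq (by simp)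
  let U := (EuclideanSpace.basisFun n ℂ).toBasis.toMatrix b
  have hU : ∀ j i, U j i = b i j := fun _ _ => rfl
  refine ⟨U, (EuclideanSpace.basisFun n ℂ).toMatrix_orthonormalBasis_mem_unitary b, ?_⟩
  ext j i
  rw [mul_diagonal, hU]
  by_cases hi : d i = 0
  · have : col i = 0 := inner_self_eq_zero.mp (by rw [hcol, if_pos rfl, hi]; simp)
    simp [hi, show K j i = 0 from congrArg (· j) this]
  · rw [hb i hi]
    simp only [v, col, PiLp.smul_apply, smul_eq_mul]
    rw [mul_comm, ← mul_assoc, mul_inv_cancel₀ (hsqrt i hi), one_mul]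

lemma exists_unitary_eq_mul_msqrt (M : Matrix n n ℂ) :
    ∃ U ∈ unitaryGroup n ℂ, M = U * msqrt (Mᴴ * M) := by
  have hM := posSemidef_conjTranspose_mul_self M
  set V : Matrix n n ℂ := (hM.1.eigenvectorUnitary : Matrix n n ℂ)
  have hV : V ∈ unitaryGroup n ℂ := hM.1.eigenvectorUnitary.2
  have hK : (M * V)ᴴ * (M * V) = diagonal (RCLike.ofReal ∘ hM.1.eigenvalues) := by
    rw [conjTranspose_mul, Matrix.mul_assoc, ← Matrix.mul_assoc Mᴴ,
      ← hM.1.conjTranspose_mul_mul_eigenvectorUnitary]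
    simp only [V, Matrix.mul_assoc]
  obtain ⟨U, hU, hUK⟩ := exists_unitary_mul_diagonal_sqrt_eq hM.eigenvalues_nonneg hK
  refine ⟨U * Vᴴ, mul_mem hU (conjTranspose_mem_unitaryGroup hV), ?_⟩
  rw [msqrt_of_posSemidef hM, show U * Vᴴ * (V * diagonal _ * Vᴴ)
      = U * (Vᴴ * V) * diagonal (fun i => ((√(hM.1.eigenvalues i) : ℝ) : ℂ)) * Vᴴ by
    simp only [Matrix.mul_assoc], conjTranspose_mul_self_of_mem_unitaryGroup hV, Matrix.mul_one,
    hUK, Matrix.mul_assoc, mul_conjTranspose_self_of_mem_unitaryGroup hV, Matrix.mul_one]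

lemma re_trace_unitary_mul_le_traceNorm {W : Matrix n n ℂ} (hW : W ∈ unitaryGroup n ℂ)
    (M : Matrix n n ℂ) : (W * M).trace.re ≤ traceNorm M := by
  obtain ⟨U, hU, hM⟩ := exists_unitary_eq_mul_msqrt M
  have hP := posSemidef_conjTranspose_mul_self M
  set V : Matrix n n ℂ := (hP.1.eigenvectorUnitary : Matrix n n ℂ)
  have hZ : Vᴴ * (W * U) * V ∈ unitaryGroup n ℂ :=
    mul_mem (mul_mem (conjTranspose_mem_unitaryGroup hP.1.eigenvectorUnitary.2) (mul_mem hW hU))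
      hP.1.eigenvectorUnitary.2
  have htr : (W * M).trace = ∑ i, ((√(hP.1.eigenvalues i) : ℝ) : ℂ) * (Vᴴ * (W * U) * V) i i := by
    rw [← trace_mul_diagonal_mul_conjTranspose, ← msqrt_of_posSemidef hP,
      trace_mul_comm (msqrt _), Matrix.mul_assoc, ← hM]
  rw [htr, Complex.re_sum, traceNorm_eq_sum_sqrt_eigenvalues]
  gcongr with i
  refine (Complex.re_le_norm _).trans ?_
  rw [norm_mul, Complex.norm_real, Real.norm_of_nonneg (Real.sqrt_nonneg _)]
  exact mul_le_of_le_one_right (Real.sqrt_nonneg _) (entry_norm_bound_of_unitary hZ i i)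

lemma exists_unitary_re_trace_mul_eq_traceNorm (M : Matrix n n ℂ) :
    ∃ W ∈ unitaryGroup n ℂ, (W * M).trace.re = traceNorm M := by
  obtain ⟨U, hU, hM⟩ := exists_unitary_eq_mul_msqrt M
  refine ⟨Uᴴ, conjTranspose_mem_unitaryGroup hU, ?_⟩
  calc (Uᴴ * M).trace.re = (Uᴴ * (U * msqrt (Mᴴ * M))).trace.re := by rw [← hM]
    _ = traceNorm M := by
      rw [← Matrix.mul_assoc, conjTranspose_mul_self_of_mem_unitaryGroup hU, Matrix.one_mul]
      rfl

lemma re_trace_unitary_mul_mul_conjTranspose_le {W : Matrix n n ℂ} (hW : W ∈ unitaryGroup n ℂ)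
    (P Q : Matrix n n ℂ) :
    (W * (P * Qᴴ)).trace.re ≤ √(Pᴴ * P).trace.re * √(Qᴴ * Q).trace.re := by
  have hQ : (Wᴴ * Q)ᴴ * (Wᴴ * Q) = Qᴴ * Q := by
    rw [conjTranspose_mul, conjTranspose_conjTranspose, Matrix.mul_assoc, ← Matrix.mul_assoc W,
      mul_conjTranspose_self_of_mem_unitaryGroup hW, Matrix.one_mul]
  have := re_trace_conjTranspose_mul_le (Wᴴ * Q) P
  rw [hQ, conjTranspose_mul, conjTranspose_conjTranspose] at this
  rw [← Matrix.mul_assoc, trace_mul_comm, ← Matrix.mul_assoc, mul_comm (√_)]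
  exact this

lemma traceNorm_mul_conjTranspose_sub_le (X Y : Matrix n n ℂ) :
    traceNorm (X * Xᴴ - Y * Yᴴ) ≤
      √((X - Y)ᴴ * (X - Y)).trace.re * √((X + Y)ᴴ * (X + Y)).trace.re := by
  obtain ⟨W, hW, hWtr⟩ := exists_unitary_re_trace_mul_eq_traceNorm (X * Xᴴ - Y * Yᴴ)
  have hsplit : (X - Y) * (X + Y)ᴴ + (X + Y) * (X - Y)ᴴ = (2 : ℂ) • (X * Xᴴ - Y * Yᴴ) := by
    rw [conjTranspose_add, conjTranspose_sub, two_smul]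
    noncomm_ring
  have htwice : (W * ((X - Y) * (X + Y)ᴴ)).trace.re + (W * ((X + Y) * (X - Y)ᴴ)).trace.re =
      2 * traceNorm (X * Xᴴ - Y * Yᴴ) := by
    rw [← Complex.add_re, ← trace_add, ← Matrix.mul_add, hsplit, Matrix.mul_smul, trace_smul,
      smul_eq_mul, ← hWtr]
    simp
  have h₁ := re_trace_unitary_mul_mul_conjTranspose_le hW (X - Y) (X + Y)
  have h₂ := re_trace_unitary_mul_mul_conjTranspose_le hW (X + Y) (X - Y)
  linarith

lemma Matrix.IsHermitian.exists_unitary_commute_mul_eq_abs {D : Matrix n n ℂ}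
    (hD : D.IsHermitian) :
    ∃ W ∈ unitaryGroup n ℂ, W * D = D * W ∧
      W * D = (hD.eigenvectorUnitary : Matrix n n ℂ) *
        diagonal (fun i => ((|hD.eigenvalues i| : ℝ) : ℂ)) *
        (hD.eigenvectorUnitary : Matrix n n ℂ)ᴴ := by
  have hDV := hD.eq_mul_diagonal_mul_conjTranspose
  set V : Matrix n n ℂ := (hD.eigenvectorUnitary : Matrix n n ℂ)
  have hV : V ∈ unitaryGroup n ℂ := hD.eigenvectorUnitary.2
  set lam := hD.eigenvalues
  let s : n → ℂ := fun i => if lam i < 0 then -1 else 1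
  have hs : diagonal s ∈ unitaryGroup n ℂ := by
    rw [mem_unitaryGroup_iff, star_eq_conjTranspose, diagonal_conjTranspose, diagonal_mul_diagonal,
      ← diagonal_one]
    congr 1
    ext i
    by_cases h : lam i < 0 <;> simp [s, h]
  have hsabs : s * (RCLike.ofReal ∘ lam) = fun i => ((|lam i| : ℝ) : ℂ) := by
    ext i
    by_cases h : lam i < 0
    · simp [s, h, abs_of_neg h]
    · simp [s, h, abs_of_nonneg (not_lt.mp h)]
  refine ⟨V * diagonal s * Vᴴ, mul_mem (mul_mem hV hs) (conjTranspose_mem_unitaryGroup hV), ?_, ?_⟩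
  all_goals
    rw [hDV]
    simp only [mul_diagonal_mul_conjTranspose_mul hV]
  · rw [mul_comm s]
  · rw [hsabs]

lemma trace_mul_mul_self_sub_mul_self {S T W : Matrix n n ℂ} (hW : W * (S - T) = (S - T) * W) :
    (W * (S * S - T * T)).trace = (W * (S - T) * (S + T)).trace := by
  have hsplit : (2 : ℂ) • (S * S - T * T) = (S - T) * (S + T) + (S + T) * (S - T) := by
    rw [two_smul]
    noncomm_ring
  have hcyc : (W * ((S + T) * (S - T))).trace = (W * (S - T) * (S + T)).trace := by
    rw [← Matrix.mul_assoc, trace_mul_comm, ← Matrix.mul_assoc, ← hW]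
  have h : (2 : ℂ) * (W * (S * S - T * T)).trace =
      (W * ((S - T) * (S + T))).trace + (W * ((S + T) * (S - T))).trace := by
    rw [← smul_eq_mul, ← trace_smul, ← Matrix.mul_smul, hsplit, Matrix.mul_add, trace_add]
  rw [hcyc, ← Matrix.mul_assoc] at h
  linear_combination h / 2

/-- The Powers–Størmer inequality. With `W` the sign of `S - T`,
`tr W (S² - T²) = tr |S - T| (S + T)`, and in an eigenbasis of `S - T` the diagonal of `S + T`
dominates `|λᵢ|`. -/
theorem re_trace_sub_mul_sub_le_traceNorm {S T : Matrix n n ℂ} (hS : S.PosSemidef)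
    (hT : T.PosSemidef) : ((S - T) * (S - T)).trace.re ≤ traceNorm (S * S - T * T) := by
  have hD : (S - T).IsHermitian := hS.1.sub hT.1
  obtain ⟨W, hW, hcomm, habs⟩ := hD.exists_unitary_commute_mul_eq_abs
  set V : Matrix n n ℂ := (hD.eigenvectorUnitary : Matrix n n ℂ)
  set lam := hD.eigenvalues
  have hDV : S - T = V * diagonal (RCLike.ofReal ∘ lam) * Vᴴ :=
    hD.eq_mul_diagonal_mul_conjTranspose
  have hdiag : ∀ i, (Vᴴ * (S - T) * V) i i = lam i := fun i => by
    simp [V, lam, hD.conjTranspose_mul_mul_eigenvectorUnitary]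
  calc ((S - T) * (S - T)).trace.re = ∑ i, |lam i| * |lam i| := by
        nth_rewrite 1 [hDV]
        simp [trace_mul_diagonal_mul_conjTranspose, hdiag, Complex.re_sum, abs_mul_abs_self]
    _ ≤ ∑ i, |lam i| * ((Vᴴ * (S + T) * V) i i).re := by
        gcongr with i
        exact abs_le_re_diag_conj_add hS hT V (hdiag i)
    _ = (W * (S * S - T * T)).trace.re := by
        rw [trace_mul_mul_self_sub_mul_self hcomm, habs, trace_mul_diagonal_mul_conjTranspose,
          Complex.re_sum]
        simp only [Complex.re_ofReal_mul]
    _ ≤ traceNorm (S * S - T * T) := re_trace_unitary_mul_le_traceNorm hW _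

lemma exists_mul_conjTranspose_eq_re_trace_eq_fidelity {ρ : Matrix n n ℂ} (hρ : ρ.PosSemidef)
    (σ : Matrix n n ℂ) :
    ∃ B : Matrix n n ℂ, B * Bᴴ = ρ ∧ (Bᴴ * B).trace = ρ.trace ∧
      (Bᴴ * msqrt σ).trace.re = fidelity ρ σ := by
  obtain ⟨W, hW, hWF⟩ := exists_unitary_re_trace_mul_eq_traceNorm (msqrt ρ * msqrt σ)
  have hS : (msqrt ρ)ᴴ = msqrt ρ := (posSemidef_msqrt hρ).1
  refine ⟨msqrt ρ * Wᴴ, ?_, ?_, ?_⟩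
  · rw [conjTranspose_mul, conjTranspose_conjTranspose, hS, Matrix.mul_assoc,
      ← Matrix.mul_assoc Wᴴ, conjTranspose_mul_self_of_mem_unitaryGroup hW, Matrix.one_mul,
      msqrt_mul_msqrt hρ]
  · rw [conjTranspose_mul, conjTranspose_conjTranspose, hS, trace_mul_comm, Matrix.mul_assoc,
      ← Matrix.mul_assoc Wᴴ, conjTranspose_mul_self_of_mem_unitaryGroup hW, Matrix.one_mul,
      msqrt_mul_msqrt hρ]
  · rw [conjTranspose_mul, conjTranspose_conjTranspose, hS, Matrix.mul_assoc, hWF]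
    rfl

lemma fidelity_le_sqrt_mul_sqrt {ρ σ : Matrix n n ℂ} (hρ : ρ.PosSemidef) (hσ : σ.PosSemidef) :
    fidelity ρ σ ≤ √ρ.trace.re * √σ.trace.re := by
  obtain ⟨B, -, hBB, hBF⟩ := exists_mul_conjTranspose_eq_re_trace_eq_fidelity hρ σ
  have := re_trace_conjTranspose_mul_le B (msqrt σ)
  rwa [hBF, hBB, (posSemidef_msqrt hσ).1.eq, msqrt_mul_msqrt hσ] at this

lemma traceNorm_sub_sq_le {ρ σ : Matrix n n ℂ} (hρ : ρ.PosSemidef) (hσ : σ.PosSemidef) :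
    traceNorm (ρ - σ) ^ 2 ≤ (ρ.trace.re + σ.trace.re) ^ 2 - 4 * fidelity ρ σ ^ 2 := by
  obtain ⟨B, hBρ, hBB, hBF⟩ := exists_mul_conjTranspose_eq_re_trace_eq_fidelity hρ σ
  set T := msqrt σ
  have hTT : Tᴴ * T = σ := by rw [(posSemidef_msqrt hσ).1.eq, msqrt_mul_msqrt hσ]
  have hTT' : T * Tᴴ = σ := by rw [(posSemidef_msqrt hσ).1.eq, msqrt_mul_msqrt hσ]
  have hminus := re_trace_conjTranspose_mul_sub_self B T
  have hplus := re_trace_conjTranspose_mul_add_self B T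
  rw [hBB, hTT, hBF] at hminus hplus
  have h := traceNorm_mul_conjTranspose_sub_le B T
  rw [hBρ, hTT', hminus, hplus] at h
  have h2 := pow_le_pow_left₀ (traceNorm_nonneg _) h 2
  rw [mul_pow, Real.sq_sqrt (hminus ▸ (posSemidef_conjTranspose_mul_self _).re_trace_nonneg),
    Real.sq_sqrt (hplus ▸ (posSemidef_conjTranspose_mul_self _).re_trace_nonneg)] at h2
  linarith

lemma trace_add_trace_sub_two_fidelity_le_traceNorm {ρ σ : Matrix n n ℂ} (hρ : ρ.PosSemidef)
    (hσ : σ.PosSemidef) : ρ.trace.re + σ.trace.re - 2 * fidelity ρ σ ≤ traceNorm (ρ - σ) := by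
  have hS := posSemidef_msqrt hρ
  have hT := posSemidef_msqrt hσ
  have hST : (msqrt ρ * msqrt σ).trace.re ≤ fidelity ρ σ := by
    simpa [fidelity] using re_trace_unitary_mul_le_traceNorm (one_mem _) (msqrt ρ * msqrt σ)
  have hexp := re_trace_conjTranspose_mul_sub_self (msqrt ρ) (msqrt σ)
  rw [conjTranspose_sub, hS.1.eq, hT.1.eq, msqrt_mul_msqrt hρ, msqrt_mul_msqrt hσ] at hexp
  have hPS := re_trace_sub_mul_sub_le_traceNorm hS hT
  rw [msqrt_mul_msqrt hρ, msqrt_mul_msqrt hσ] at hPS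
  linarith

end

lemma sq_add_sqrt_add_sq_div_four_le_one {a b F t : ℝ} (ha₀ : 0 ≤ a) (ha₁ : a ≤ 1) (hb₀ : 0 ≤ b)
    (hb₁ : b ≤ 1) (hF : F ≤ √a * √b) (ht : t ^ 2 ≤ (a + b) ^ 2 - 4 * F ^ 2) :
    (F + √((1 - a) * (1 - b))) ^ 2 + t ^ 2 / 4 ≤ 1 := by
  set u := √a * √b
  set v := √((1 - a) * (1 - b))
  have hu : u ^ 2 = a * b := by rw [mul_pow, Real.sq_sqrt ha₀, Real.sq_sqrt hb₀]
  have hv : v ^ 2 = (1 - a) * (1 - b) := Real.sq_sqrt (by nlinarith)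
  have hR : 0 ≤ a + b - a * b - (a + b) ^ 2 / 4 := by
    nlinarith [sq_nonneg (a - b), mul_nonneg (add_nonneg ha₀ hb₀) (by linarith : 0 ≤ 2 - a - b)]
  have hsq : (2 * (u * v)) ^ 2 ≤ (a + b - a * b - (a + b) ^ 2 / 4) ^ 2 := by
    have : (a + b - a * b - (a + b) ^ 2 / 4) ^ 2 - (2 * (u * v)) ^ 2 =
        (a - b) ^ 2 * (12 * (a * b) + (4 - a - b) ^ 2) / 16 := by
      rw [mul_pow, mul_pow, hu, hv]
      ring
    nlinarith [mul_nonneg (sq_nonneg (a - b)) (add_nonneg (by positivity : (0 : ℝ) ≤ 12 * (a * b))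
      (sq_nonneg (4 - a - b)))]
  have hkey : 2 * (u * v) ≤ a + b - a * b - (a + b) ^ 2 / 4 :=
    (pow_le_pow_iff_left₀ (by positivity) hR two_ne_zero).mp hsq
  nlinarith [mul_le_mul_of_nonneg_right hF (Real.sqrt_nonneg ((1 - a) * (1 - b)))]

lemma one_sub_sq_add_sqrt_le {a b F t : ℝ} (ha : a ≤ 1) (hb : b ≤ 1) (ht : a + b - 2 * F ≤ t) :
    1 - (F + √((1 - a) * (1 - b))) ^ 2 ≤ t + |a - b| := by
  have hm₀ : 0 ≤ min (1 - a) (1 - b) := le_min (by linarith) (by linarith)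
  have hmin : min (1 - a) (1 - b) ≤ √((1 - a) * (1 - b)) := Real.le_sqrt_of_sq_le <| by
    rw [sq]
    exact mul_le_mul (min_le_left _ _) (min_le_right _ _) hm₀ (by linarith)
  have habs : 2 * min (1 - a) (1 - b) = 2 - a - b - |a - b| := by
    rcases le_total a b with h | h
    · rw [min_eq_right (by linarith), abs_of_nonpos (by linarith)]; ring
    · rw [min_eq_left (by linarith), abs_of_nonneg (by linarith)]; ring
  nlinarith [sq_nonneg (1 - (F + √((1 - a) * (1 - b))))]

/-- For subnormalized states,
`(1/2)‖ρ − σ‖₁ ≤ P(ρ,σ) ≤ √(‖ρ − σ‖₁ + |tr ρ − tr σ|)`. -/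
theorem purifiedDist_bounds {n : Type*} [Fintype n] [DecidableEq n]
    (ρ σ : Matrix n n ℂ) (hρ : ρ.PosSemidef) (hσ : σ.PosSemidef)
    (hρ1 : ρ.trace.re ≤ 1) (hσ1 : σ.trace.re ≤ 1) :
    (1 / 2) * traceNorm (ρ - σ) ≤ purifiedDist ρ σ ∧
    purifiedDist ρ σ ≤ Real.sqrt (traceNorm (ρ - σ) + |ρ.trace.re - σ.trace.re|) := by
  constructor
  · have h := sq_add_sqrt_add_sq_div_four_le_one hρ.re_trace_nonneg hρ1 hσ.re_trace_nonneg hσ1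
      (fidelity_le_sqrt_mul_sqrt hρ hσ) (traceNorm_sub_sq_le hρ hσ)
    rw [purifiedDist, genFidelity]
    refine Real.le_sqrt_of_sq_le ?_
    linarith [show (1 / 2 * traceNorm (ρ - σ)) ^ 2 = traceNorm (ρ - σ) ^ 2 / 4 by ring]
  · exact Real.sqrt_le_sqrt <| one_sub_sq_add_sqrt_le hρ1 hσ1 <|
      trace_add_trace_sub_two_fidelity_le_traceNorm hρ hσ
end
end
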